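/- arXiv:1208.2617 — 2 statements merged into one kernel-verified Lean document; each statement's English description precedes it below -/
import Mathlib

section
/- Let K be a characteristic vector for M, E ⊆ V, and let v₁, v₂ ∈ E be distinct. Then b_{v₁}(K,E) + b_{v₂}(K + 2v₁*, E∖{v₁}) = b_{v₂}(K,E) + b_{v₁}(K + 2v₂*, E∖{v₂}). -/
/-!
Removing `v` from the subsets `I ∋ v` gives `f(K, I) = f(K, {v}) + f(K + 2v*, I ∖ {v})`, hence
`B_v(K,E) = f(K,{v}) + g(K + 2v*, E ∖ {v})`. Expanding both sides of the identity this way, the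
`g`-terms of the middle telescope, and each side becomes
`f(K,{v₁}) + f(K + 2v₁*, {v₂}) + g(K + 2v₁* + 2v₂*, E ∖ {v₁,v₂}) - g(K,E)`, which is symmetric in
`v₁, v₂` because `M` is.
-/

open Finset

variable {V : Type*}

/-- `M` is negative definite: `xᵀMx < 0` for every nonzero `x ∈ ℝ^V`. -/
def NegDef [Fintype V] (M : V → V → ℤ) : Prop :=
  ∀ x : V → ℝ, x ≠ 0 → (∑ v, ∑ w, (M v w : ℝ) * x v * x w) < 0

/-- `K` is a characteristic vector for `M`: `K(v) ≡ v·v (mod 2)` for all `v`. -/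
def IsChar (M : V → V → ℤ) (K : V → ℤ) : Prop :=
  ∀ v, Int.ModEq 2 (K v) (M v v)

/-- `f(K, I) = (1/2)(Σ_{v∈I} K(v) + (Σ_{v∈I} v)·(Σ_{v∈I} v))` (an exact integer division
for characteristic `K`). -/
def latF (M : V → V → ℤ) (K : V → ℤ) (I : Finset V) : ℤ :=
  ((∑ v ∈ I, K v) + ∑ v ∈ I, ∑ w ∈ I, M v w) / 2

/-- `g(K, E) = min_{I ⊆ E} f(K, I)`. -/
def latG (M : V → V → ℤ) (K : V → ℤ) (E : Finset V) : ℤ :=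
  (E.powerset.image (latF M K)).min'
    ⟨_, Finset.mem_image_of_mem _ (Finset.empty_mem_powerset E)⟩

/-- `B_v(K, E) = min { f(K, I) : v ∈ I ⊆ E }` (for `v ∈ E`). -/
def latB [DecidableEq V] (M : V → V → ℤ) (K : V → ℤ) (E : Finset V) (v : V) : ℤ :=
  ((E.erase v).powerset.image (fun I => latF M K (insert v I))).min'
    ⟨_, Finset.mem_image_of_mem _ (Finset.empty_mem_powerset _)⟩

/-- `a_v(K,E) = A_v(K,E) - g(K,E) = g(K, E∖{v}) - g(K,E)`. -/
def lata [DecidableEq V] (M : V → V → ℤ) (K : V → ℤ) (E : Finset V) (v : V) : ℤ :=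
  latG M K (E.erase v) - latG M K E

/-- `b_v(K,E) = B_v(K,E) - g(K,E)`. -/
def latb [DecidableEq V] (M : V → V → ℤ) (K : V → ℤ) (E : Finset V) (v : V) : ℤ :=
  latB M K E v - latG M K E

theorem IsChar.two_dvd_add_diag {M : V → V → ℤ} {K : V → ℤ} (hK : IsChar M K) (v : V) :
    2 ∣ K v + M v v :=
  Int.dvd_of_emod_eq_zero (by have := hK v; unfold Int.ModEq at this; omega)

theorem IsChar.shift {M : V → V → ℤ} {K : V → ℤ} (hK : IsChar M K) (v : V) :
    IsChar M (fun w => K w + 2 * M v w) := by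
  intro w
  have := hK w
  unfold Int.ModEq at this ⊢
  change (K w + 2 * M v w) % 2 = _
  omega

def latNum (M : V → V → ℤ) (K : V → ℤ) (I : Finset V) : ℤ :=
  (∑ v ∈ I, K v) + ∑ v ∈ I, ∑ w ∈ I, M v w

section Insert

variable [DecidableEq V] {M : V → V → ℤ}

theorem latNum_insert (hsym : ∀ v w, M v w = M w v) (K : V → ℤ) {v : V} {I : Finset V}
    (hv : v ∉ I) :
    latNum M K (insert v I) = K v + M v v + latNum M (fun w => K w + 2 * M v w) I := by
  have hcross : ∑ x ∈ I, ∑ y ∈ insert v I, M x y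
      = (∑ x ∈ I, M v x) + ∑ x ∈ I, ∑ y ∈ I, M x y := by
    rw [← sum_add_distrib]
    exact sum_congr rfl fun x _ => by rw [sum_insert hv, hsym]
  unfold latNum
  rw [sum_insert hv, sum_insert hv, sum_insert hv, hcross, sum_add_distrib, ← mul_sum]
  ring

theorem latF_insert (hsym : ∀ v w, M v w = M w v) {K : V → ℤ} (hK : IsChar M K) {v : V}
    {I : Finset V} (hv : v ∉ I) :
    latF M K (insert v I) = (K v + M v v) / 2 + latF M (fun w => K w + 2 * M v w) I := by
  change latNum M K (insert v I) / 2 = _ + latNum M _ I / 2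
  rw [latNum_insert hsym K hv]
  exact Int.add_ediv_of_dvd_left (hK.two_dvd_add_diag v)

theorem latB_eq_add_latG_erase (hsym : ∀ v w, M v w = M w v) {K : V → ℤ} (hK : IsChar M K) (E : Finset V)
    (v : V) :
    latB M K E v = (K v + M v v) / 2 + latG M (fun w => K w + 2 * M v w) (E.erase v) := by
  have himage : (E.erase v).powerset.image (fun I => latF M K (insert v I))
      = ((E.erase v).powerset.image (latF M fun w => K w + 2 * M v w)).image
          ((K v + M v v) / 2 + ·) := by
    rw [image_image]
    refine image_congr fun I hI => latF_insert hsym hK fun hvI => ?_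
    exact (mem_erase.mp (mem_powerset.mp hI hvI)).1 rfl
  unfold latB latG
  simp only [himage, min'_image (add_right_mono (a := (K v + M v v) / 2))]

end Insert

theorem latb_add_latb_shift [DecidableEq V] {M : V → V → ℤ} (hsym : ∀ v w, M v w = M w v)
    {K : V → ℤ} (hK : IsChar M K) (E : Finset V) (v₁ v₂ : V) :
    latb M K E v₁ + latb M (fun w => K w + 2 * M v₁ w) (E.erase v₁) v₂
      = (K v₁ + K v₂ + M v₁ v₁ + 2 * M v₁ v₂ + M v₂ v₂) / 2
        + latG M (fun w => K w + 2 * M v₁ w + 2 * M v₂ w) ((E.erase v₁).erase v₂)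
        - latG M K E := by
  have hsplit : (K v₁ + K v₂ + M v₁ v₁ + 2 * M v₁ v₂ + M v₂ v₂) / 2
      = (K v₁ + M v₁ v₁) / 2 + (K v₂ + 2 * M v₁ v₂ + M v₂ v₂) / 2 := by
    rw [← Int.add_ediv_of_dvd_left (hK.two_dvd_add_diag v₁)]
    ring_nf
  unfold latb
  rw [latB_eq_add_latG_erase hsym hK, latB_eq_add_latG_erase hsym (hK.shift v₁), hsplit]
  ring

theorem stmt4_general [DecidableEq V] (M : V → V → ℤ)
    (hsym : ∀ v w, M v w = M w v)
    (K : V → ℤ) (hK : IsChar M K) (E : Finset V) (v₁ v₂ : V) :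
    latb M K E v₁ + latb M (fun w => K w + 2 * M v₁ w) (E.erase v₁) v₂
      = latb M K E v₂ + latb M (fun w => K w + 2 * M v₂ w) (E.erase v₂) v₁ := by
  have hshift : (fun w => K w + 2 * M v₁ w + 2 * M v₂ w)
      = fun w => K w + 2 * M v₂ w + 2 * M v₁ w := by
    funext w
    ring
  rw [latb_add_latb_shift hsym hK, latb_add_latb_shift hsym hK, hshift, erase_right_comm,
    hsym v₂ v₁]
  ring_nf

/-- `b_{v₁}(K,E) + b_{v₂}(K + 2v₁*, E∖{v₁}) = b_{v₂}(K,E) + b_{v₁}(K + 2v₂*, E∖{v₂})`. -/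
theorem stmt4 [Fintype V] [DecidableEq V] (M : V → V → ℤ)
    (hsym : ∀ v w, M v w = M w v)
    (hoff : ∀ v w, v ≠ w → M v w = 0 ∨ M v w = 1)
    (hneg : NegDef M)
    (K : V → ℤ) (hK : IsChar M K) (E : Finset V) (v₁ v₂ : V)
    (h1 : v₁ ∈ E) (h2 : v₂ ∈ E) (hne : v₁ ≠ v₂) :
    latb M K E v₁ + latb M (fun w => K w + 2 * M v₁ w) (E.erase v₁) v₂
      = latb M K E v₂ + latb M (fun w => K w + 2 * M v₂ w) (E.erase v₂) v₁ :=
  stmt4_general M hsym K hK E v₁ v₂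
end

section
/- For every characteristic vector K for M and every E ⊆ V, A([−K − Σ_{v∈E} 2v*, E]) = −A([K − 2v₀*, E]), where −K − Σ_{v∈E} 2v* is the characteristic vector w ↦ −K(w) − 2·Σ_{v∈E}(v·w) and K − 2v₀* is the characteristic vector w ↦ K(w) − 2e(w). -/
open Finset

variable {V : Type*}

/-- The intersection matrix of the graph obtained by attaching the framing `m₀` to the extra
vertex `v₀ = none`, joined to `G` by the edges recorded by `e`. -/
def Mext (M : V → V → ℤ) (e : V → ℤ) (m₀ : ℤ) : Option V → Option V → ℤ := fun x y =>
  match x, y with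
  | some v, some w => M v w
  | some v, none => e v
  | none, some w => e w
  | none, none => m₀

/-- The coefficients of `Σ = v₀ + Σ_{v∈V} a_v·v`: `a = −M⁻¹e`, the unique solution of
`w·Σ = 0` for all `w ∈ V`. -/
noncomputable def sigmaC [Fintype V] [DecidableEq V] (M : V → V → ℤ) (e : V → ℤ) : V → ℚ :=
  fun v => -∑ u, ((Matrix.of fun a b => (M a b : ℚ))⁻¹ v u) * e u

/-- The rational homology class `Σ = v₀ + Σ_{v∈V} a_v·v` (coordinates). -/
noncomputable def sigmaV [Fintype V] [DecidableEq V] (M : V → V → ℤ) (e : V → ℤ) :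
    Option V → ℚ
  | none => 1
  | some v => sigmaC M e v

/-- The unique characteristic extension `L_{[K,E]}` of `K` over `v₀` (for the framing `m₀`)
with `a_{v₀}(L, E∪{v₀}) = b_{v₀}(L, E∪{v₀}) = 0`:
`L(v₀) = −m₀ + 2g(K,E) − 2g(K+2v₀*,E)`. -/
def LextV [DecidableEq V] (M : V → V → ℤ) (e : V → ℤ) (m₀ : ℤ) (K : V → ℤ) (E : Finset V) :
    Option V → ℤ
  | some v => K v
  | none => -m₀ + 2 * latG M K E - 2 * latG M (fun w => K w + 2 * e w) E

/-- The Alexander grading `A([K,E]) = (1/2)(L_{[K,E]}(Σ) + Σ·Σ)`, computed with the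
framing `m₀` on `v₀`. -/
noncomputable def AlexAt [Fintype V] [DecidableEq V] (M : V → V → ℤ) (e : V → ℤ) (m₀ : ℤ)
    (K : V → ℤ) (E : Finset V) : ℚ :=
  (1 / 2) * ((∑ x : Option V, (LextV M e m₀ K E x : ℚ) * sigmaV M e x)
    + ∑ x : Option V, ∑ y : Option V, (Mext M e m₀ x y : ℚ) * sigmaV M e x * sigmaV M e y)

/-- The Alexander grading `A([K,E])` (independent of the framing; computed with framing `0`). -/
noncomputable def Alex [Fintype V] [DecidableEq V] (M : V → V → ℤ) (e : V → ℤ)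
    (K : V → ℤ) (E : Finset V) : ℚ :=
  AlexAt M e 0 K E


section Aux
variable [DecidableEq V]

lemma even_num (M : V → V → ℤ) (hsym : ∀ v w, M v w = M w v)
    (K : V → ℤ) (hK : IsChar M K) (I : Finset V) :
    (2:ℤ) ∣ ((∑ v ∈ I, K v) + ∑ v ∈ I, ∑ w ∈ I, M v w) := by
  classical
  induction I using Finset.induction with
  | empty => simp
  | @insert a I ha ih =>
    rw [Finset.sum_insert ha, Finset.sum_insert ha]
    simp only [Finset.sum_insert ha]
    rw [Finset.sum_add_distrib]
    have h1 : K a % 2 = M a a % 2 := hK a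
    have h2 : ∑ v ∈ I, M v a = ∑ w ∈ I, M a w :=
      Finset.sum_congr rfl fun v _ => hsym v a
    omega

lemma num_reflect (M : V → V → ℤ) (hsym : ∀ v w, M v w = M w v)
    (K : V → ℤ) {E I : Finset V} (h : I ⊆ E) :
    (∑ v ∈ I, (-K v - 2 * ∑ u ∈ E, M u v)) + ∑ v ∈ I, ∑ w ∈ I, M v w
      = ((∑ v ∈ E \ I, K v) + ∑ v ∈ E \ I, ∑ w ∈ E \ I, M v w)
        - ((∑ v ∈ E, K v) + ∑ v ∈ E, ∑ w ∈ E, M v w) := by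
  have hsplit : ∀ f : V → ℤ, ∑ x ∈ E, f x = ∑ x ∈ E \ I, f x + ∑ x ∈ I, f x :=
    fun f => (Finset.sum_sdiff h).symm
  have hKs : ∑ v ∈ E, K v = ∑ v ∈ E \ I, K v + ∑ v ∈ I, K v := hsplit _
  have hE : ∑ v ∈ E, ∑ w ∈ E, M v w
      = (∑ v ∈ E \ I, ∑ w ∈ E \ I, M v w + ∑ v ∈ E \ I, ∑ w ∈ I, M v w)
        + (∑ v ∈ I, ∑ w ∈ E \ I, M v w + ∑ v ∈ I, ∑ w ∈ I, M v w) := by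
    rw [hsplit (fun v => ∑ w ∈ E, M v w)]
    rw [show ∑ v ∈ E \ I, ∑ w ∈ E, M v w
        = ∑ v ∈ E \ I, (∑ w ∈ E \ I, M v w + ∑ w ∈ I, M v w) from
      Finset.sum_congr rfl fun v _ => hsplit _]
    rw [show ∑ v ∈ I, ∑ w ∈ E, M v w
        = ∑ v ∈ I, (∑ w ∈ E \ I, M v w + ∑ w ∈ I, M v w) from
      Finset.sum_congr rfl fun v _ => hsplit _]
    rw [Finset.sum_add_distrib, Finset.sum_add_distrib]
  have hBC : ∑ v ∈ I, ∑ w ∈ E \ I, M v w = ∑ v ∈ E \ I, ∑ w ∈ I, M v w := by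
    rw [Finset.sum_comm]
    exact Finset.sum_congr rfl fun v _ => Finset.sum_congr rfl fun w _ => hsym w v
  have hEI : ∑ v ∈ I, ∑ u ∈ E, M u v
      = ∑ v ∈ E \ I, ∑ w ∈ I, M v w + ∑ v ∈ I, ∑ w ∈ I, M v w := by
    rw [Finset.sum_comm, hsplit (fun u => ∑ v ∈ I, M u v)]
  have hL : ∑ v ∈ I, (-K v - 2 * ∑ u ∈ E, M u v)
      = -∑ v ∈ I, K v - 2 * ∑ v ∈ I, ∑ u ∈ E, M u v := by
    rw [Finset.sum_sub_distrib, Finset.sum_neg_distrib, ← Finset.mul_sum]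
  omega

lemma latG_le (M : V → V → ℤ) (K : V → ℤ) {E I : Finset V} (h : I ⊆ E) :
    latG M K E ≤ latF M K I :=
  Finset.min'_le _ _ (Finset.mem_image_of_mem _ (Finset.mem_powerset.2 h))

lemma latG_exists (M : V → V → ℤ) (K : V → ℤ) (E : Finset V) :
    ∃ I, I ⊆ E ∧ latG M K E = latF M K I := by
  have hm := Finset.min'_mem (E.powerset.image (latF M K))
    ⟨_, Finset.mem_image_of_mem _ (Finset.empty_mem_powerset E)⟩
  rw [Finset.mem_image] at hm
  obtain ⟨I, hI, hEq⟩ := hm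
  exact ⟨I, Finset.mem_powerset.1 hI, hEq.symm⟩

lemma latF_reflect (M : V → V → ℤ) (hsym : ∀ v w, M v w = M w v)
    (K : V → ℤ) (hK : IsChar M K) {E I : Finset V} (h : I ⊆ E) :
    latF M (fun w => -K w - 2 * ∑ u ∈ E, M u w) I = latF M K (E \ I) - latF M K E := by
  unfold latF
  have hnum := num_reflect M hsym K h
  have e1 := even_num M hsym K hK (E \ I)
  have e2 := even_num M hsym K hK E
  simp only at hnum ⊢
  omega

lemma latG_reflect (M : V → V → ℤ) (hsym : ∀ v w, M v w = M w v)
    (K : V → ℤ) (hK : IsChar M K) (E : Finset V) :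
    latG M (fun w => -K w - 2 * ∑ u ∈ E, M u w) E = latG M K E - latF M K E := by
  apply le_antisymm
  · obtain ⟨J, hJ, hJe⟩ := latG_exists M K E
    have h1 : latG M (fun w => -K w - 2 * ∑ u ∈ E, M u w) E
        ≤ latF M (fun w => -K w - 2 * ∑ u ∈ E, M u w) (E \ J) :=
      latG_le _ _ (Finset.sdiff_subset)
    rw [latF_reflect M hsym K hK Finset.sdiff_subset] at h1
    rw [Finset.sdiff_sdiff_eq_self hJ] at h1
    omega
  · obtain ⟨I, hI, hIe⟩ := latG_exists M (fun w => -K w - 2 * ∑ u ∈ E, M u w) E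
    rw [hIe, latF_reflect M hsym K hK hI]
    have := latG_le M K (E := E) (I := E \ I) Finset.sdiff_subset
    omega

lemma latF_sub2e (M : V → V → ℤ) (hsym : ∀ v w, M v w = M w v)
    (K : V → ℤ) (hK : IsChar M K) (e : V → ℤ) (E : Finset V) :
    latF M (fun w => K w - 2 * e w) E = latF M K E - ∑ u ∈ E, e u := by
  unfold latF
  have e2 := even_num M hsym K hK E
  have hL : ∑ v ∈ E, (K v - 2 * e v) = ∑ v ∈ E, K v - 2 * ∑ v ∈ E, e v := by
    rw [Finset.sum_sub_distrib, ← Finset.mul_sum]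
  simp only at hL ⊢
  omega

lemma Ln_sum (M : V → V → ℤ) (hsym : ∀ v w, M v w = M w v)
    (K : V → ℤ) (hK : IsChar M K) (e : V → ℤ) (E : Finset V) :
    (2 * latG M (fun w => -K w - 2 * ∑ u ∈ E, M u w) E
      - 2 * latG M (fun w => (-K w - 2 * ∑ u ∈ E, M u w) + 2 * e w) E)
    + (2 * latG M (fun w => K w - 2 * e w) E
      - 2 * latG M (fun w => (K w - 2 * e w) + 2 * e w) E) = -2 * ∑ u ∈ E, e u := by
  have hK2 : IsChar M (fun w => K w - 2 * e w) := fun v => by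
    have h : K v % 2 = M v v % 2 := hK v
    show (K v - 2 * e v) % 2 = M v v % 2
    omega
  have hA : latG M (fun w => -K w - 2 * ∑ u ∈ E, M u w) E = latG M K E - latF M K E :=
    latG_reflect M hsym K hK E
  have hfun1 : (fun w => (-K w - 2 * ∑ u ∈ E, M u w) + 2 * e w)
      = (fun w => -(K w - 2 * e w) - 2 * ∑ u ∈ E, M u w) := funext fun w => by ring
  have hB : latG M (fun w => (-K w - 2 * ∑ u ∈ E, M u w) + 2 * e w) E
      = latG M (fun w => K w - 2 * e w) E - latF M (fun w => K w - 2 * e w) E := by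
    rw [hfun1]
    exact latG_reflect M hsym _ hK2 E
  have hfun2 : (fun w => (K w - 2 * e w) + 2 * e w) = K := funext fun w => by ring
  have hC : latF M (fun w => K w - 2 * e w) E = latF M K E - ∑ u ∈ E, e u :=
    latF_sub2e M hsym K hK e E
  rw [hA, hB, hfun2, hC]
  ring

end Aux

lemma mulVec_sigmaC [Fintype V] [DecidableEq V] (M : V → V → ℤ) (hneg : NegDef M)
    (e : V → ℤ) (v : V) :
    ∑ w, (M v w : ℚ) * sigmaC M e w = -(e v : ℚ) := by
  set Mq : Matrix V V ℚ := Matrix.of fun a b => (M a b : ℚ) with hMq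
  have hdet : Mq.det ≠ 0 := by
    intro h0
    have hR : (Mq.map (Rat.cast : ℚ → ℝ)).det = 0 := by
      have h := RingHom.map_det (Rat.castHom ℝ) Mq
      rw [h0] at h
      simpa [RingHom.mapMatrix_apply] using h.symm
    obtain ⟨x, hx, hx0⟩ := (Matrix.exists_mulVec_eq_zero_iff).2 hR
    have hlt := hneg x hx
    have heq : ∑ v, ∑ w, (M v w : ℝ) * x v * x w
        = ∑ v, x v * ((Mq.map (Rat.cast : ℚ → ℝ)).mulVec x v) := by
      refine Finset.sum_congr rfl fun v _ => ?_
      rw [Matrix.mulVec, dotProduct, Finset.mul_sum]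
      refine Finset.sum_congr rfl fun w _ => ?_
      simp [Mq, Matrix.map_apply]
      ring
    rw [heq, hx0] at hlt
    simp at hlt
  have hinv : Mq * Mq⁻¹ = 1 := Matrix.mul_nonsing_inv Mq (isUnit_iff_ne_zero.2 hdet)
  have hsig : sigmaC M e = -(Mq⁻¹.mulVec (fun u => (e u : ℚ))) := by
    funext w
    unfold sigmaC
    simp [Matrix.mulVec, dotProduct, Mq]
  have h1 : ∑ w, (M v w : ℚ) * sigmaC M e w = Mq.mulVec (sigmaC M e) v := by
    simp [Matrix.mulVec, dotProduct, Mq]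
  rw [h1, hsig, Matrix.mulVec_neg, Matrix.mulVec_mulVec, hinv, Matrix.one_mulVec]
  simp

lemma AlexAt_formula [Fintype V] [DecidableEq V] (M : V → V → ℤ) (e : V → ℤ)
    (hMa : ∀ v, ∑ w, (M v w : ℚ) * sigmaC M e w = -(e v : ℚ))
    (K : V → ℤ) (E : Finset V) :
    AlexAt M e 0 K E
      = (1 / 2) * (((2 * latG M K E - 2 * latG M (fun w => K w + 2 * e w) E : ℤ) : ℚ)
        + ∑ v, (K v : ℚ) * sigmaC M e v + ∑ v, (e v : ℚ) * sigmaC M e v) := by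
  unfold AlexAt
  simp only [Fintype.sum_option]
  simp only [LextV, Mext, sigmaV]
  have hd : ∑ v, ∑ w, (M v w : ℚ) * sigmaC M e v * sigmaC M e w
      = -∑ v, (e v : ℚ) * sigmaC M e v := by
    rw [← Finset.sum_neg_distrib]
    refine Finset.sum_congr rfl fun v _ => ?_
    have h2 : ∑ w, (M v w : ℚ) * sigmaC M e v * sigmaC M e w
        = sigmaC M e v * ∑ w, (M v w : ℚ) * sigmaC M e w := by
      rw [Finset.mul_sum]
      exact Finset.sum_congr rfl fun w _ => by ring
    rw [h2, hMa v]
    ring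
  rw [Finset.sum_add_distrib, hd]
  set L1 := latG M K E
  set L2 := latG M (fun w => K w + 2 * e w) E
  push_cast
  ring

/-- `A([−K − Σ_{v∈E} 2v*, E]) = −A([K − 2v₀*, E])`. -/
theorem stmt11 [Fintype V] [DecidableEq V] (M : V → V → ℤ)
    (hsym : ∀ v w, M v w = M w v)
    (hoff : ∀ v w, v ≠ w → M v w = 0 ∨ M v w = 1)
    (hneg : NegDef M)
    (e : V → ℤ) (he : ∀ v, e v = 0 ∨ e v = 1)
    (K : V → ℤ) (hK : IsChar M K) (E : Finset V) :
    Alex M e (fun w => -K w - 2 * ∑ u ∈ E, M u w) E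
      = -Alex M e (fun w => K w - 2 * e w) E := by
  have hMa := mulVec_sigmaC M hneg e
  show AlexAt M e 0 _ E = -AlexAt M e 0 _ E
  rw [AlexAt_formula M e hMa _ E, AlexAt_formula M e hMa _ E]
  beta_reduce -- normalize
  have h1 : ∑ v, ((-K v - 2 * ∑ u ∈ E, M u v : ℤ) : ℚ) * sigmaC M e v
      = -∑ v, (K v : ℚ) * sigmaC M e v + 2 * ∑ u ∈ E, (e u : ℚ) := by
    have step : ∀ v, ((-K v - 2 * ∑ u ∈ E, M u v : ℤ) : ℚ) * sigmaC M e v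
        = -((K v : ℚ) * sigmaC M e v) - 2 * ∑ u ∈ E, (M u v : ℚ) * sigmaC M e v := by
      intro v
      push_cast
      rw [← Finset.sum_mul]
      ring
    rw [Finset.sum_congr rfl fun v _ => step v]
    rw [Finset.sum_sub_distrib, Finset.sum_neg_distrib, ← Finset.mul_sum]
    rw [Finset.sum_comm]
    rw [Finset.sum_congr rfl fun u (_ : u ∈ E) => hMa u]
    rw [Finset.sum_neg_distrib]
    ring
  have h2 : ∑ v, ((K v - 2 * e v : ℤ) : ℚ) * sigmaC M e v
      = ∑ v, (K v : ℚ) * sigmaC M e v - 2 * ∑ v, (e v : ℚ) * sigmaC M e v := by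
    have step : ∀ v, ((K v - 2 * e v : ℤ) : ℚ) * sigmaC M e v
        = (K v : ℚ) * sigmaC M e v - 2 * ((e v : ℚ) * sigmaC M e v) := fun v => by
      push_cast; ring
    rw [Finset.sum_congr rfl fun v _ => step v, Finset.sum_sub_distrib, ← Finset.mul_sum]
  have h4 := Ln_sum M hsym K hK e E
  have h4q : ((2 * latG M (fun w => -K w - 2 * ∑ u ∈ E, M u w) E
      - 2 * latG M (fun w => (-K w - 2 * ∑ u ∈ E, M u w) + 2 * e w) E : ℤ) : ℚ)
      + ((2 * latG M (fun w => K w - 2 * e w) E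
      - 2 * latG M (fun w => (K w - 2 * e w) + 2 * e w) E : ℤ) : ℚ)
      = -2 * ∑ u ∈ E, (e u : ℚ) := by
    have h := congrArg (fun z : ℤ => (z : ℚ)) h4
    push_cast at h
    push_cast
    linarith
  linarith [h1, h2, h4q]
end
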